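/- Let n ≥ 4 and let A be an n×n completely positive matrix whose associated graph G(A) is the n-cycle. Then cp-rank(A) ≥ n. -/
import Mathlib


open Matrix BigOperators

def Matrix.IsCP {n : Type*} [Fintype n] (A : Matrix n n ℝ) : Prop :=
  ∃ (m : ℕ) (B : Matrix (Fin m) n ℝ), (∀ i j, 0 ≤ B i j) ∧ A = Bᵀ * B

noncomputable def Matrix.cpRank {n : Type*} [Fintype n] (A : Matrix n n ℝ) : ℕ :=
  sInf {m | ∃ B : Matrix (Fin m) n ℝ, (∀ i j, 0 ≤ B i j) ∧ A = Bᵀ * B}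

theorem stmt_9 (n : ℕ) (hn : 4 ≤ n) (A : Matrix (Fin n) (Fin n) ℝ) (hcp : A.IsCP)
    (hgraph : ∀ i j : Fin n, i ≠ j →
      (A i j ≠ 0 ↔ (j = i + ⟨1, by omega⟩ ∨ i = j + ⟨1, by omega⟩))) :
    n ≤ A.cpRank := by
  haveI : NeZero n := ⟨by omega⟩
  -- reduce to: every m in the set is ≥ n
  have key : ∀ (m : ℕ) (B : Matrix (Fin m) (Fin n) ℝ),
      (∀ i j, 0 ≤ B i j) → A = Bᵀ * B → n ≤ m := by
    intro m B hB hA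
    set one : Fin n := ⟨1, by omega⟩ with hone
    have hentry : ∀ i j, A i j = ∑ k, B k i * B k j := by
      intro i j
      rw [hA]
      simp [Matrix.mul_apply, Matrix.transpose_apply]
    have hpos : ∀ i j : Fin n, (∃ k, 0 < B k i ∧ 0 < B k j) → A i j ≠ 0 := by
      intro i j ⟨k, hki, hkj⟩
      rw [hentry]
      have : 0 < ∑ k, B k i * B k j := by
        apply Finset.sum_pos'
        · intro k _; exact mul_nonneg (hB k i) (hB k j)
        · exact ⟨k, Finset.mem_univ k, mul_pos hki hkj⟩
      exact ne_of_gt this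
    have hneg : ∀ i j : Fin n, A i j ≠ 0 → ∃ k, 0 < B k i ∧ 0 < B k j := by
      intro i j h
      by_contra hc
      push_neg at hc
      apply h
      rw [hentry]
      apply Finset.sum_eq_zero
      intro k _
      rcases eq_or_lt_of_le (hB k i) with h0 | h0
      · rw [← h0, zero_mul]
      · have := hc k h0
        have : B k j = 0 := le_antisymm this (hB k j)
        rw [this, mul_zero]
    -- Fin arithmetic helpers
    have hadd1 : ∀ i : Fin n, i ≠ i + one := by
      intro i h
      have h0 : one = 0 := by
        have := add_eq_left.mp h.symm
        exact this
      have : (1 : ℕ) = 0 := congrArg Fin.val h0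
      omega
    have h11 : one + one = (⟨2, by omega⟩ : Fin n) := by
      apply Fin.ext
      rw [Fin.val_add]
      show (1 + 1) % n = 2
      exact Nat.mod_eq_of_lt (by omega)
    have h21 : (⟨2, by omega⟩ : Fin n) + one = (⟨3, by omega⟩ : Fin n) := by
      apply Fin.ext
      rw [Fin.val_add]
      show (2 + 1) % n = 3
      exact Nat.mod_eq_of_lt (by omega)
    have hadd2 : ∀ i : Fin n, i ≠ i + one + one := by
      intro i h
      rw [add_assoc, h11] at h
      have h0 : (⟨2, by omega⟩ : Fin n) = 0 := add_eq_left.mp h.symm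
      have : (2 : ℕ) = 0 := congrArg Fin.val h0
      omega
    have hne21 : ∀ i : Fin n, i + one + one ≠ i + one := by
      intro i h
      rw [add_assoc, h11] at h
      have h0 : (⟨2, by omega⟩ : Fin n) = one := add_left_cancel h
      have : (2 : ℕ) = 1 := congrArg Fin.val h0
      omega
    have hadd3 : ∀ i : Fin n, i ≠ i + one + one + one := by
      intro i h
      rw [add_assoc, add_assoc, ← add_assoc one, h11, h21] at h
      have h0 : (⟨3, by omega⟩ : Fin n) = 0 := add_eq_left.mp h.symm
      have : (3 : ℕ) = 0 := congrArg Fin.val h0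
      omega
    -- each edge gives a row
    have hadj : ∀ i : Fin n, ∃ k, 0 < B k i ∧ 0 < B k (i + one) := by
      intro i
      apply hneg
      exact (hgraph i (i + one) (hadd1 i)).mpr (Or.inl rfl)
    choose f hf1 hf2 using hadj
    have hinj : Function.Injective f := by
      intro i i' hfe
      by_contra hne
      have hBi : 0 < B (f i) i := hf1 i
      have hBi1 : 0 < B (f i) (i + one) := hf2 i
      have hBi' : 0 < B (f i) i' := by rw [hfe]; exact hf1 i'
      have hBi'1 : 0 < B (f i) (i' + one) := by rw [hfe]; exact hf2 i'
      have contra : ∀ a b : Fin n, 0 < B (f i) a → 0 < B (f i) b → a ≠ b →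
          (b = a + one ∨ a = b + one) := by
        intro a b ha hb hab
        exact (hgraph a b hab).mp (hpos a b ⟨f i, ha, hb⟩)
      rcases contra i i' hBi hBi' hne with h | h
      · -- i' = i + 1 ; consider i and i' + 1 = i + 2
        subst h
        rcases contra i (i + one + one) hBi hBi'1 (hadd2 i) with h | h
        · exact hne21 i h
        · exact hadd3 i h
      · -- i = i' + 1 ; consider i' and i + 1 = i' + 2
        subst h
        rcases contra i' (i' + one + one) hBi' hBi1 (hadd2 i') with h | h
        · exact hne21 i' h
        · exact hadd3 i' h
    have := Fintype.card_le_of_injective f hinj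
    simpa using this
  rcases hcp with ⟨m0, B0, hB0, hA0⟩
  have hne : {m | ∃ B : Matrix (Fin m) (Fin n) ℝ, (∀ i j, 0 ≤ B i j) ∧ A = Bᵀ * B}.Nonempty :=
    ⟨m0, B0, hB0, hA0⟩
  obtain ⟨B, hB, hA⟩ := Nat.sInf_mem hne
  exact key _ B hB hA
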